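/- arXiv:1805.02592 — 5 statements merged into one kernel-verified Lean document; each statement's English description precedes it below -/
import Mathlib

section
/- Let Y be a topological space with a closed partial order, and let ψ be a monotone flow on Y (each time-t map preserves the order). If p is a periodic point of ψ, then the orbit of p is unordered: no two distinct points x, y on the orbit of p satisfy x ≺ y. -/
/-!
For a monotone flow `ϕ` and a point `q`, the times `t` with `q ≤ ϕ t q` form a closed additive
submonoid of `ℝ`, and it contains every multiple `m * r` of a period `r` of `q`. Dirichlet's
approximation theorem shows that such a submonoid is closed under negation. So `q < ϕ c q`
would give `q ≤ ϕ (-c) q`, and applying `ϕ c` yields `ϕ c q ≤ q`, a contradiction.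
-/

theorem AddSubmonoid.neg_mem_of_isClosed_of_int_mul_mem (M : AddSubmonoid ℝ)
    (hM : IsClosed (M : Set ℝ)) {r : ℝ} (hr : 0 < r) (hrM : ∀ m : ℤ, (m : ℝ) * r ∈ M)
    {c : ℝ} (hc : c ∈ M) : -c ∈ M := by
  rw [← SetLike.mem_coe, ← hM.closure_eq, Metric.mem_closure_iff]
  intro ε hε
  obtain ⟨n, hn⟩ := exists_nat_gt (r / ε)
  obtain ⟨k, hk, -, hdir⟩ := Real.exists_nat_abs_mul_sub_round_le (c / r) n.succ_pos
  obtain ⟨k, rfl⟩ := Nat.exists_eq_add_one_of_ne_zero hk.ne'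
  set j := round (((k + 1 : ℕ) : ℝ) * (c / r))
  refine ⟨k • c + ((-j : ℤ) : ℝ) * r, add_mem (nsmul_mem hc k) (hrM _), ?_⟩
  have hrε : r < ε * (n + 1 + 1) := by
    rw [div_lt_iff₀ hε] at hn
    nlinarith
  calc dist (-c) (k • c + ((-j : ℤ) : ℝ) * r)
      = |r * (((k + 1 : ℕ) : ℝ) * (c / r) - j)| := by
        rw [Real.dist_eq, ← abs_neg]
        push_cast
        field_simp
        ring_nf
    _ = r * |((k + 1 : ℕ) : ℝ) * (c / r) - j| := by rw [abs_mul, abs_of_pos hr]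
    _ ≤ r * (1 / ((n + 1 : ℕ) + 1)) := by gcongr
    _ < ε := by
        push_cast
        rw [mul_one_div, div_lt_iff₀ (by positivity)]
        exact hrε

namespace Flow

variable {Y : Type*} [TopologicalSpace Y] [Preorder Y]

def timesAbove (ϕ : Flow ℝ Y) (hmono : ∀ t, Monotone (ϕ t)) (q : Y) : AddSubmonoid ℝ where
  carrier := {t | q ≤ ϕ t q}
  zero_mem' := (ϕ.map_zero_apply q).ge
  add_mem' {s t} hs ht := calc
    q ≤ ϕ t q := ht
    _ ≤ ϕ t (ϕ s q) := hmono t hs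
    _ = ϕ (s + t) q := by rw [add_comm, ϕ.map_add]

section

variable (ϕ : Flow ℝ Y) (hmono : ∀ t, Monotone (ϕ t)) (q : Y)

theorem mem_timesAbove {t : ℝ} : t ∈ ϕ.timesAbove hmono q ↔ q ≤ ϕ t q := Iff.rfl

theorem isClosed_timesAbove [OrderClosedTopology Y] :
    IsClosed (ϕ.timesAbove hmono q : Set ℝ) :=
  isClosed_le continuous_const (ϕ.continuous continuous_id continuous_const)

theorem int_mul_mem_timesAbove {r : ℝ} (hq : ϕ r q = q) (m : ℤ) :
    (m : ℝ) * r ∈ ϕ.timesAbove hmono q := by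
  have hperiodic : Function.Periodic (fun t => ϕ t q) r := fun t => by
    simp only [ϕ.map_add, hq]
  rw [mem_timesAbove, hperiodic.int_mul_eq, ϕ.map_zero_apply]

end

theorem not_lt_apply_of_apply_eq_self [OrderClosedTopology Y] (ϕ : Flow ℝ Y)
    (hmono : ∀ t, Monotone (ϕ t)) {q : Y} {r : ℝ} (hr : 0 < r) (hq : ϕ r q = q) (c : ℝ) :
    ¬ q < ϕ c q := by
  intro hlt
  have hback : -c ∈ ϕ.timesAbove hmono q :=
    AddSubmonoid.neg_mem_of_isClosed_of_int_mul_mem _ (ϕ.isClosed_timesAbove hmono q) hr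
      (ϕ.int_mul_mem_timesAbove hmono q hq) hlt.le
  have : ϕ c q ≤ q := calc
    ϕ c q ≤ ϕ c (ϕ (-c) q) := hmono c hback
    _ = q := by rw [← ϕ.map_add, add_neg_cancel, ϕ.map_zero_apply]
  exact hlt.not_ge this

end Flow

/-- A monotone flow on a space with a closed partial order has unordered
periodic orbits: no two points on the orbit of a periodic point `p` are
strictly comparable. -/
theorem periodic_orbit_unordered
    {Y : Type*} [TopologicalSpace Y] [PartialOrder Y] [OrderClosedTopology Y]
    (φ : ℝ → Y → Y)
    (hcont : Continuous fun z : ℝ × Y => φ z.1 z.2)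
    (hzero : ∀ x, φ 0 x = x)
    (hadd : ∀ s t x, φ (s + t) x = φ s (φ t x))
    (hmono : ∀ t : ℝ, Monotone (φ t))
    (p : Y) (r : ℝ) (hr : 0 < r) (hper : φ r p = p) :
    ∀ a b : ℝ, ¬ φ a p < φ b p := by
  intro a b
  let ϕ : Flow ℝ Y := ⟨φ, hcont, hadd, hzero⟩
  have hq : ϕ r (ϕ a p) = ϕ a p := by
    rw [← ϕ.map_add, add_comm, ϕ.map_add]
    exact congrArg (φ a) hper
  have hb : φ b p = ϕ (b - a) (ϕ a p) := by
    rw [← ϕ.map_add, sub_add_cancel]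
  rw [hb]
  exact ϕ.not_lt_apply_of_apply_eq_self hmono hr hq (b - a)
end

section
/- Let ψ be a monotone flow on an ordered space Y with closed order. Suppose {p_k} and {q_k} are sequences in Y both converging to a point y, and for every k, every point of the orbit of p_k is strictly below every point of the orbit of q_k (i.e., O(p_k) ≺ O(q_k)). Then y is a stationary point: ψ^t y = y for all t ∈ ℝ. -/
/-- If sequences `p k → y` and `q k → y` in a monotone flow satisfy
`O(p k) ≺ O(q k)` for every `k`, then `y` is stationary. -/
theorem stationary_of_orbit_squeeze
    {Y : Type*} [TopologicalSpace Y] [PartialOrder Y] [OrderClosedTopology Y]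
    (φ : ℝ → Y → Y)
    (hcont : Continuous fun z : ℝ × Y => φ z.1 z.2)
    (hzero : ∀ x, φ 0 x = x)
    (hadd : ∀ s t x, φ (s + t) x = φ s (φ t x))
    (hmono : ∀ t : ℝ, Monotone (φ t))
    (p q : ℕ → Y) (y : Y)
    (hp : Filter.Tendsto p Filter.atTop (nhds y))
    (hq : Filter.Tendsto q Filter.atTop (nhds y))
    (horder : ∀ k : ℕ, ∀ a b : ℝ, φ a (p k) < φ b (q k)) :
    ∀ t : ℝ, φ t y = y := by
  intro t
  have hc : Continuous (φ t) := hcont.comp (continuous_const.prodMk continuous_id)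
  have h1 : φ t y ≤ y :=
    le_of_tendsto_of_tendsto ((hc.tendsto y).comp hp) hq
      (Filter.Eventually.of_forall fun k => by
        have := horder k t 0; rw [hzero] at this; exact this.le)
  have h2 : y ≤ φ t y :=
    le_of_tendsto_of_tendsto hp ((hc.tendsto y).comp hq)
      (Filter.Eventually.of_forall fun k => by
        have := horder k 0 t; rw [hzero] at this; exact this.le)
  exact le_antisymm h1 h2
end

section
/- Let ψ be a monotone flow on an ordered space Y. Suppose p is a periodic point of minimal period r > 0 and q is a periodic point of minimal period s > 0, with p ≺ q, and suppose it is not the case that every point of the orbit of p is strictly below every point of the orbit of q. Then r/s is rational. -/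
/-!
Every element `m r + n s` of the additive group generated by the two periods keeps `p` below `q`:
`φ^(m r + n s) p = φ^(n s) p ≤ φ^(n s) q = q`. If `r / s` were irrational this group would be
dense in `ℝ`, so by continuity the whole orbit of `p` would lie below `q`. A failure of
`O(p) ≺ O(q)` then forces `φ^a p = φ^b q` for some `a, b`, i.e. `p` and `q` lie on one orbit
and have the same minimal period, so `r / s = 1` after all.
-/

open Set

theorem Dense.apply_le_of_continuous {X α : Type*} [TopologicalSpace X] [TopologicalSpace α]
    [Preorder α] [ClosedIicTopology α] {S : Set X} (hS : Dense S) {f : X → α}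
    (hf : Continuous f) {q : α} (h : ∀ t ∈ S, f t ≤ q) (t : X) : f t ≤ q := by
  have hq : q ∈ upperBounds (f '' S) := forall_mem_image.2 h
  rw [hS.upperBounds_image hf] at hq
  exact hq (mem_range_self t)

/-- An `ℝ`-action on `Y` in curried form; continuity is not required. -/
structure IsFlow {Y : Type*} (φ : ℝ → Y → Y) : Prop where
  map_zero : ∀ x, φ 0 x = x
  map_add : ∀ s t x, φ (s + t) x = φ s (φ t x)

namespace IsFlow

variable {Y : Type*} {φ : ℝ → Y → Y} (hφ : IsFlow φ)
include hφ

theorem apply_neg_apply (t : ℝ) (x : Y) : φ (-t) (φ t x) = x := by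
  rw [← hφ.map_add, neg_add_cancel, hφ.map_zero]

theorem injective (t : ℝ) : Function.Injective (φ t) := fun x y h => by
  rw [← hφ.apply_neg_apply t x, h, hφ.apply_neg_apply]

theorem apply_sub_apply (a b : ℝ) (x : Y) : φ b (φ (a - b) x) = φ a x := by
  rw [← hφ.map_add, add_sub_cancel]

theorem apply_eq_apply_iff {a b : ℝ} {x y : Y} : φ a x = φ b y ↔ φ (a - b) x = y := by
  rw [← hφ.apply_sub_apply a b x, (hφ.injective b).eq_iff]

theorem apply_comm (s t : ℝ) (x : Y) : φ s (φ t x) = φ t (φ s x) := by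
  rw [← hφ.map_add, add_comm, hφ.map_add]

theorem apply_apply_eq_self_iff {t : ℝ} (c : ℝ) {x : Y} : φ t (φ c x) = φ c x ↔ φ t x = x := by
  rw [hφ.apply_comm, (hφ.injective c).eq_iff]

def periods (x : Y) : AddSubgroup ℝ where
  carrier := {t | φ t x = x}
  zero_mem' := hφ.map_zero x
  add_mem' {s t} (hs : φ s x = x) (ht : φ t x = x) := by
    show φ (s + t) x = x
    rw [hφ.map_add, ht, hs]
  neg_mem' {t} (ht : φ t x = x) := (congrArg (φ (-t)) ht).symm.trans (hφ.apply_neg_apply t x)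

theorem mem_periods {t : ℝ} {x : Y} : t ∈ hφ.periods x ↔ φ t x = x := Iff.rfl

theorem apply_le_of_mem_periods_sup [Preorder Y] (hmono : ∀ t, Monotone (φ t))
    {p q : Y} (hpq : p ≤ q) {t : ℝ} (ht : t ∈ hφ.periods p ⊔ hφ.periods q) : φ t p ≤ q := by
  obtain ⟨u, hu, v, hv, rfl⟩ := AddSubgroup.mem_sup.1 ht
  calc φ (u + v) p = φ v p := by rw [add_comm, hφ.map_add, hφ.mem_periods.1 hu]
    _ ≤ φ v q := hmono v hpq
    _ = q := hv

end IsFlow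

/-- If `p ≺ q` are periodic points of minimal periods `r`, `s` for a monotone
flow and `O(p) ≺ O(q)` fails, then `r/s` is rational. -/
theorem ratio_rational_of_not_orbit_lt
    {Y : Type*} [TopologicalSpace Y] [PartialOrder Y] [OrderClosedTopology Y]
    (φ : ℝ → Y → Y)
    (hcont : Continuous fun z : ℝ × Y => φ z.1 z.2)
    (hzero : ∀ x, φ 0 x = x)
    (hadd : ∀ s t x, φ (s + t) x = φ s (φ t x))
    (hmono : ∀ t : ℝ, Monotone (φ t))
    (p q : Y) (r s : ℝ)
    (hrp : IsLeast {t : ℝ | 0 < t ∧ φ t p = p} r)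
    (hsq : IsLeast {t : ℝ | 0 < t ∧ φ t q = q} s)
    (hpq : p < q)
    (hnot : ¬ ∀ a b : ℝ, φ a p < φ b q) :
    ∃ m : ℚ, (r / s : ℝ) = (m : ℝ) := by
  have hφ : IsFlow φ := ⟨hzero, hadd⟩
  by_contra hrat
  have hdense : Dense (AddSubgroup.closure {r, s} : Set ℝ) :=
    dense_addSubgroupClosure_pair_iff.2 fun ⟨m, hm⟩ => hrat ⟨m, hm.symm⟩
  have hperiods : AddSubgroup.closure {r, s} ≤ hφ.periods p ⊔ hφ.periods q :=
    (AddSubgroup.closure_le _).2 <| pair_subset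
      (AddSubgroup.mem_sup_left hrp.1.2) (AddSubgroup.mem_sup_right hsq.1.2)
  have hbelow : ∀ t, φ t p ≤ q :=
    hdense.apply_le_of_continuous (hcont.comp (continuous_id.prodMk continuous_const))
      fun t ht => hφ.apply_le_of_mem_periods_sup hmono hpq.le (hperiods ht)
  simp only [not_forall] at hnot
  obtain ⟨a, b, hab⟩ := hnot
  have hle : φ a p ≤ φ b q := hφ.apply_sub_apply a b p ▸ hmono b (hbelow (a - b))
  have hq : φ (a - b) p = q := hφ.apply_eq_apply_iff.1 (hle.eq_of_not_lt hab)
  have hrs : r = s := hrp.unique (by simpa only [← hq, hφ.apply_apply_eq_self_iff] using hsq)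
  exact hrat ⟨1, by rw [hrs, div_self hsq.1.1.ne', Rat.cast_one]⟩
end

section
/- Let ψ be a monotone flow on an ordered space Y, and suppose p ≺ q are nonstationary periodic points with minimal periods r and s respectively, such that O(p) ≺ O(q) fails. Then the order interval [p,q] is resonant: for any two nonstationary periodic points u, v ∈ [p,q], the ratio of their minimal periods is a positive rational number. -/
/-- A point has minimal period `r` for the flow `φ` if `r` is the least
positive time fixing it. -/
def MinPeriod {Y : Type*} (φ : ℝ → Y → Y) (p : Y) (r : ℝ) : Prop :=
  IsLeast {t : ℝ | 0 < t ∧ φ t p = p} r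

/-!
If `x ≤ y` have periods `a`, `b` with `a / b` irrational, the closed set of times `t` with
`x ≤ φ t y` contains every `m a + n b` by monotonicity and periodicity; these are dense, so the
whole orbit of `x` lies below that of `y`. For `p ≤ q` this would give `O(p) ≺ O(q)`, because
orbits that meet have equal periods; hence `r / s` is rational. For `p ≤ w ≤ q` with the period
of `w` incommensurable with `r` and with `s`, it gives `O(p) ≤ O(w) ≤ O(q)`, and a common point
of `O(p)` and `O(q)` would squeeze `O(w)` to a rest point; so `O(p) ≺ O(q)` again. Thus every
period in `[p, q]` is commensurable with `r`.
-/

open Function Set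

lemma irrational_div_comm {a b : ℝ} : Irrational (a / b) ↔ Irrational (b / a) := by
  rw [← inv_div, irrational_inv_iff]

lemma not_irrational_div_trans {a b c : ℝ} (hb : b ≠ 0) (hab : ¬Irrational (a / b))
    (hbc : ¬Irrational (b / c)) : ¬Irrational (a / c) := by
  rw [← div_mul_div_cancel₀ hb]
  exact fun h => h.mul_cases.elim hab hbc

section MinPeriod

variable {Y : Type*} {φ : ℝ → Y → Y} {x : Y} {r : ℝ}

lemma MinPeriod.pos (h : MinPeriod φ x r) : 0 < r := h.1.1

lemma MinPeriod.isFixedPt (h : MinPeriod φ x r) : IsFixedPt (φ r) x := h.1.2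

lemma MinPeriod.flow_half_ne (h : MinPeriod φ x r) : φ (r / 2) x ≠ x := fun hfix =>
  (half_lt_self h.pos).not_ge (h.2 ⟨half_pos h.pos, hfix⟩)

end MinPeriod

section FlowAlgebra

variable {Y : Type*} {φ : ℝ → Y → Y}

lemma Function.IsFixedPt.flow_zsmul (hzero : ∀ x, φ 0 x = x)
    (hadd : ∀ s t x, φ (s + t) x = φ s (φ t x)) {a : ℝ} {x : Y} (h : IsFixedPt (φ a) x)
    (n : ℤ) : IsFixedPt (φ (n • a)) x := by
  induction n using Int.induction_on with
  | zero => simpa [IsFixedPt] using hzero x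
  | succ n ih => rwa [IsFixedPt, add_zsmul, one_zsmul, hadd, h.eq]
  | pred n ih =>
    calc φ ((-n - 1 : ℤ) • a) x = φ ((-n - 1 : ℤ) • a) (φ a x) := by rw [h.eq]
      _ = x := by rw [← hadd, sub_zsmul, one_zsmul, neg_add_cancel_right, ih.eq]

lemma isFixedPt_flow_iff (hzero : ∀ x, φ 0 x = x) (hadd : ∀ s t x, φ (s + t) x = φ s (φ t x))
    {t c : ℝ} {x : Y} : IsFixedPt (φ t) (φ c x) ↔ IsFixedPt (φ t) x := by
  have hinj : Injective (φ c) :=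
    LeftInverse.injective (g := φ (-c)) fun y => by rw [← hadd, neg_add_cancel, hzero]
  rw [IsFixedPt, IsFixedPt, ← hadd, add_comm, hadd, hinj.eq_iff]

lemma minPeriod_flow_iff (hzero : ∀ x, φ 0 x = x) (hadd : ∀ s t x, φ (s + t) x = φ s (φ t x))
    {c r : ℝ} {x : Y} : MinPeriod φ (φ c x) r ↔ MinPeriod φ x r := by
  change IsLeast {t | 0 < t ∧ IsFixedPt (φ t) (φ c x)} r ↔
    IsLeast {t | 0 < t ∧ IsFixedPt (φ t) x} r
  simp only [isFixedPt_flow_iff hzero hadd]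

lemma MinPeriod.eq_of_flow_eq (hzero : ∀ x, φ 0 x = x)
    (hadd : ∀ s t x, φ (s + t) x = φ s (φ t x)) {x y : Y} {a b rx ry : ℝ}
    (hx : MinPeriod φ x rx) (hy : MinPeriod φ y ry) (h : φ a x = φ b y) : rx = ry :=
  ((minPeriod_flow_iff hzero hadd).2 hx).unique <| h ▸ (minPeriod_flow_iff hzero hadd).2 hy

end FlowAlgebra

section MonotoneFlow

variable {Y : Type*} [TopologicalSpace Y] [PartialOrder Y] [ClosedIciTopology Y]
  {φ : ℝ → Y → Y}

lemma le_flow_of_irrational (hcont : Continuous fun z : ℝ × Y => φ z.1 z.2)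
    (hzero : ∀ x, φ 0 x = x) (hadd : ∀ s t x, φ (s + t) x = φ s (φ t x))
    (hmono : ∀ t : ℝ, Monotone (φ t)) {x y : Y} {a b : ℝ} (hxy : x ≤ y)
    (hx : IsFixedPt (φ a) x) (hy : IsFixedPt (φ b) y) (hab : Irrational (a / b)) (t : ℝ) :
    x ≤ φ t y := by
  set T := {t : ℝ | x ≤ φ t y}
  have hT : IsClosed T :=
    isClosed_Ici.preimage (hcont.comp (continuous_id.prodMk continuous_const))
  have hsub : (AddSubgroup.closure {a, b} : Set ℝ) ⊆ T := by
    rintro _ hmn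
    obtain ⟨m, n, rfl⟩ := AddSubgroup.mem_closure_pair.1 hmn
    calc x = φ (m • a) x := (hx.flow_zsmul hzero hadd m).symm
      _ ≤ φ (m • a) y := hmono _ hxy
      _ = φ (m • a + n • b) y := by rw [hadd, hy.flow_zsmul hzero hadd n]
  have hdense : Dense T := (dense_addSubgroupClosure_pair_iff.2 hab).mono hsub
  exact hT.closure_subset (hdense.closure_eq ▸ mem_univ t)

lemma flow_le_flow_of_irrational (hcont : Continuous fun z : ℝ × Y => φ z.1 z.2)
    (hzero : ∀ x, φ 0 x = x) (hadd : ∀ s t x, φ (s + t) x = φ s (φ t x))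
    (hmono : ∀ t : ℝ, Monotone (φ t)) {x y : Y} {a b : ℝ} (hxy : x ≤ y)
    (hx : IsFixedPt (φ a) x) (hy : IsFixedPt (φ b) y) (hab : Irrational (a / b)) (s t : ℝ) :
    φ s x ≤ φ t y := by
  have := hmono s (le_flow_of_irrational hcont hzero hadd hmono hxy hx hy hab (t - s))
  rwa [← hadd, add_sub_cancel] at this

lemma flow_lt_flow_of_irrational_of_mem_Icc (hcont : Continuous fun z : ℝ × Y => φ z.1 z.2)
    (hzero : ∀ x, φ 0 x = x) (hadd : ∀ s t x, φ (s + t) x = φ s (φ t x))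
    (hmono : ∀ t : ℝ, Monotone (φ t)) {p q w : Y} {r s rw : ℝ} (hw : w ∈ Icc p q)
    (hp : IsFixedPt (φ r) p) (hq : IsFixedPt (φ s) q) (hmw : MinPeriod φ w rw)
    (hpw : Irrational (r / rw)) (hwq : Irrational (rw / s)) (a b : ℝ) : φ a p < φ b q := by
  have below (t : ℝ) : φ a p ≤ φ t w :=
    flow_le_flow_of_irrational hcont hzero hadd hmono hw.1 hp hmw.isFixedPt hpw a t
  have above (t : ℝ) : φ t w ≤ φ b q :=
    flow_le_flow_of_irrational hcont hzero hadd hmono hw.2 hmw.isFixedPt hq hwq t b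
  refine (below 0).trans (above 0) |>.lt_of_ne fun heq => hmw.flow_half_ne ?_
  have hconst (t : ℝ) : φ t w = φ a p := le_antisymm (heq ▸ above t) (below t)
  rw [hconst, ← hconst 0, hzero]

end MonotoneFlow

theorem interval_resonant_general
    {Y : Type*} [TopologicalSpace Y] [PartialOrder Y] [OrderClosedTopology Y]
    (φ : ℝ → Y → Y)
    (hcont : Continuous fun z : ℝ × Y => φ z.1 z.2)
    (hzero : ∀ x, φ 0 x = x)
    (hadd : ∀ s t x, φ (s + t) x = φ s (φ t x))
    (hmono : ∀ t : ℝ, Monotone (φ t))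
    (p q : Y) (r s : ℝ)
    (hrp : MinPeriod φ p r)
    (hsq : MinPeriod φ q s)
    (hpq : p < q)
    (hnot : ¬ ∀ a b : ℝ, φ a p < φ b q) :
    ∀ u ∈ Set.Icc p q, ∀ v ∈ Set.Icc p q, ∀ ru rv : ℝ,
      MinPeriod φ u ru → MinPeriod φ v rv →
      ∃ m : ℚ, 0 < m ∧ (ru / rv : ℝ) = (m : ℝ) := by
  have hrs : ¬Irrational (r / s) := by
    intro hirr
    refine hnot fun a b => (flow_le_flow_of_irrational hcont hzero hadd hmono hpq.le
      hrp.isFixedPt hsq.isFixedPt hirr a b).lt_of_ne fun heq => not_irrational_one ?_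
    rwa [hrp.eq_of_flow_eq hzero hadd hsq heq, div_self hsq.pos.ne'] at hirr
  have hcomm : ∀ w ∈ Icc p q, ∀ rw, MinPeriod φ w rw → ¬Irrational (rw / r) := by
    intro w hw rw hmw hirr
    have hwq : Irrational (rw / s) := by
      by_contra h
      exact not_irrational_div_trans hsq.pos.ne' h (irrational_div_comm.not.1 hrs) hirr
    exact hnot (flow_lt_flow_of_irrational_of_mem_Icc hcont hzero hadd hmono hw hrp.isFixedPt
      hsq.isFixedPt hmw (irrational_div_comm.1 hirr) hwq)
  intro u hu v hv ru rv hmu hmv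
  have huv : ¬Irrational (ru / rv) := not_irrational_div_trans hrp.pos.ne'
    (hcomm u hu ru hmu) (irrational_div_comm.not.1 (hcomm v hv rv hmv))
  obtain ⟨m, hm⟩ := not_not.1 huv
  exact ⟨m, Rat.cast_pos.1 (hm ▸ div_pos hmu.pos hmv.pos), hm.symm⟩

/-- If `p ≺ q` are nonstationary periodic points for a monotone flow and
`O(p) ≺ O(q)` fails, then the order interval `[p,q]` is resonant: ratios of
minimal periods of nonstationary periodic points in it are positive rationals. -/
theorem interval_resonant
    {Y : Type*} [TopologicalSpace Y] [PartialOrder Y] [OrderClosedTopology Y]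
    (φ : ℝ → Y → Y)
    (hcont : Continuous fun z : ℝ × Y => φ z.1 z.2)
    (hzero : ∀ x, φ 0 x = x)
    (hadd : ∀ s t x, φ (s + t) x = φ s (φ t x))
    (hmono : ∀ t : ℝ, Monotone (φ t))
    (p q : Y) (r s : ℝ)
    (hrp : MinPeriod φ p r) (hr : 0 < r)
    (hsq : MinPeriod φ q s) (hs : 0 < s)
    (hpq : p < q)
    (hnot : ¬ ∀ a b : ℝ, φ a p < φ b q) :
    ∀ u ∈ Set.Icc p q, ∀ v ∈ Set.Icc p q, ∀ ru rv : ℝ,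
      MinPeriod φ u ru → MinPeriod φ v rv →
      ∃ m : ℚ, 0 < m ∧ (ru / rv : ℝ) = (m : ℝ) :=
  interval_resonant_general φ hcont hzero hadd hmono p q r s hrp hsq hpq hnot
end

section
/- Let ψ be a monotone flow and suppose p, q are periodic points with minimal periods r, s > 0 such that p ≺ q and r/s is irrational. Then every point of the orbit of p is strictly below q, i.e. ψ^t p ≺ q for all t ∈ ℝ. -/
lemma flow_zsmul_periodic {Y : Type*} (φ : ℝ → Y → Y)
    (hzero : ∀ x, φ 0 x = x)
    (hadd : ∀ s t x, φ (s + t) x = φ s (φ t x))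
    (x : Y) (r : ℝ) (hr : φ r x = x) : ∀ m : ℤ, φ (m • r) x = x := by
  have hnat : ∀ n : ℕ, φ (n • r) x = x := by
    intro n
    induction n with
    | zero => simpa using hzero x
    | succ k ih =>
        have : (k + 1 : ℕ) • r = r + (k : ℕ) • r := by push_cast [add_smul]; ring
        rw [this, hadd, ih, hr]
  intro m
  cases m with
  | ofNat n => simpa using hnat n
  | negSucc n =>
      have h1 : φ ((n + 1 : ℕ) • r) x = x := hnat (n + 1)
      have h2 : φ (Int.negSucc n • r) (φ ((n + 1 : ℕ) • r) x) = φ 0 x := by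
        rw [← hadd]
        norm_num [Int.negSucc_eq]
        ring_nf
      rw [h1, hzero] at h2
      exact h2

/-- If `p ≺ q` are periodic points with minimal periods `r`, `s` for a monotone
flow and `r/s` is irrational, then every point of the orbit of `p` is strictly
below `q`. -/
theorem orbit_lt_point_of_irrational
    {Y : Type*} [TopologicalSpace Y] [PartialOrder Y] [OrderClosedTopology Y]
    (φ : ℝ → Y → Y)
    (hcont : Continuous fun z : ℝ × Y => φ z.1 z.2)
    (hzero : ∀ x, φ 0 x = x)
    (hadd : ∀ s t x, φ (s + t) x = φ s (φ t x))
    (hmono : ∀ t : ℝ, Monotone (φ t))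
    (p q : Y) (r s : ℝ)
    (hrp : IsLeast {t : ℝ | 0 < t ∧ φ t p = p} r)
    (hsq : IsLeast {t : ℝ | 0 < t ∧ φ t q = q} s)
    (hpq : p < q)
    (hirr : Irrational (r / s)) :
    ∀ t : ℝ, φ t p < q := by
  obtain ⟨⟨hr0, hrP⟩, hrmin⟩ := hrp
  obtain ⟨⟨hs0, hsP⟩, hsmin⟩ := hsq
  -- the subgroup generated by r and s is dense
  have hSd : Dense ((AddSubgroup.closure {r, s} : AddSubgroup ℝ) : Set ℝ) := by
    rcases AddSubgroup.dense_or_cyclic (AddSubgroup.closure {r, s}) with h | ⟨a, ha⟩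
    · exact h
    · exfalso
      have hrS : r ∈ AddSubgroup.closure ({r, s} : Set ℝ) :=
        AddSubgroup.subset_closure (by simp)
      have hsS : s ∈ AddSubgroup.closure ({r, s} : Set ℝ) :=
        AddSubgroup.subset_closure (by simp)
      rw [ha, AddSubgroup.mem_closure_singleton] at hrS hsS
      obtain ⟨m, hm⟩ := hrS
      obtain ⟨n, hn⟩ := hsS
      have ha0 : a ≠ 0 := by
        rintro rfl; simp at hn; exact hs0.ne' hn.symm
      have hn0 : (n : ℝ) ≠ 0 := by
        rintro h; rw [← hn] at hs0; simp [show (n:ℝ) = 0 from h] at hs0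
      apply hirr
      refine ⟨(m : ℚ) / (n : ℚ), ?_⟩
      push_cast
      rw [← hm, ← hn]
      field_simp
      ring
  -- weak inequality on the dense subgroup, hence everywhere
  have hle : ∀ t : ℝ, φ t p ≤ q := by
    have hclosed : IsClosed {u : ℝ | φ u p ≤ q} := by
      have hc : Continuous fun u : ℝ => φ u p :=
        hcont.comp (continuous_id.prodMk continuous_const)
      exact isClosed_le hc continuous_const
    have hsub : ((AddSubgroup.closure {r, s} : AddSubgroup ℝ) : Set ℝ) ⊆
        {u : ℝ | φ u p ≤ q} := by
      intro u hu
      rw [SetLike.mem_coe, AddSubgroup.mem_closure_pair] at hu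
      obtain ⟨m, n, hmn⟩ := hu
      have : φ u p = φ (n • s) p := by
        rw [← hmn, add_comm, hadd, flow_zsmul_periodic φ hzero hadd p r hrP m]
      simp only [Set.mem_setOf_eq]
      rw [this]
      calc φ (n • s) p ≤ φ (n • s) q := hmono _ hpq.le
        _ = q := flow_zsmul_periodic φ hzero hadd q s hsP n
    intro t
    have : closure ((AddSubgroup.closure {r, s} : AddSubgroup ℝ) : Set ℝ) ⊆
        {u : ℝ | φ u p ≤ q} := closure_minimal hsub hclosed
    exact this (hSd t)
  -- strictness
  intro t
  refine lt_of_le_of_ne (hle t) fun heq : φ t p = q => ?_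
  have hq_r : φ r q = q := by
    rw [← heq, ← hadd, add_comm, hadd, hrP]
  have hp_eq : φ (-t) q = p := by
    rw [← heq, ← hadd, neg_add_cancel, hzero]
  have hp_s : φ s p = p := by
    rw [← hp_eq, ← hadd, add_comm, hadd, hsP]
  have h1 : s ≤ r := hsmin ⟨hr0, hq_r⟩
  have h2 : r ≤ s := hrmin ⟨hs0, hp_s⟩
  have : r / s = 1 := by rw [le_antisymm h2 h1]; field_simp
  rw [this] at hirr
  exact hirr ⟨1, by norm_num⟩
end
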